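/- With I₀(𝓛) = {i : eᵢ(n) ∈ 𝓛} for any linear subspace 𝓛 of ℝⁿ, the inclusions I₀(𝔐₀^lin) ⊆ I₀(𝓛_#) ⊆ 𝓘_# hold, and 𝓘_# is a proper subset of {1,…,n}. -/
import Mathlib


open Matrix

/-- `R (XᵀX)⁻¹ Xᵀ`, the 1×n row vector whose i-th entry is `R(X'X)⁻¹xᵢ·'`. -/
noncomputable def cRow {n k : ℕ} (X : Matrix (Fin n) (Fin k) ℝ)
    (R : Matrix (Fin 1) (Fin k) ℝ) : Matrix (Fin 1) (Fin n) ℝ :=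
  R * (Xᵀ * X)⁻¹ * Xᵀ

/-- OLS estimator `β̂(y) = (X'X)⁻¹X'y`. -/
noncomputable def betaHat {n k : ℕ} (X : Matrix (Fin n) (Fin k) ℝ)
    (y : Fin n → ℝ) : Fin k → ℝ :=
  ((Xᵀ * X)⁻¹ * Xᵀ).mulVec y

/-- Residual vector `û(y) = y - Xβ̂(y)`. -/
noncomputable def uHat {n k : ℕ} (X : Matrix (Fin n) (Fin k) ℝ)
    (y : Fin n → ℝ) : Fin n → ℝ :=
  y - X.mulVec (betaHat X y)

/-- `B(y) = R(X'X)⁻¹X' diag(û₁(y),…,ûₙ(y))`, viewed as a vector in ℝⁿ. -/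
noncomputable def Bmap {n k : ℕ} (X : Matrix (Fin n) (Fin k) ℝ)
    (R : Matrix (Fin 1) (Fin k) ℝ) (y : Fin n → ℝ) : Fin n → ℝ :=
  fun i => cRow X R 0 i * uHat X y i

/-- The set `𝖡 = {y : B(y) = 0}`. -/
noncomputable def Bset {n k : ℕ} (X : Matrix (Fin n) (Fin k) ℝ)
    (R : Matrix (Fin 1) (Fin k) ℝ) : Set (Fin n → ℝ) :=
  {y | Bmap X R y = 0}

/-- `Ω̂_Het(y) = R(X'X)⁻¹X' diag(d₁û₁²(y),…,dₙûₙ²(y)) X(X'X)⁻¹R'`. -/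
noncomputable def OmegaHat {n k : ℕ} (X : Matrix (Fin n) (Fin k) ℝ)
    (R : Matrix (Fin 1) (Fin k) ℝ) (d : Fin n → ℝ) (y : Fin n → ℝ) : ℝ :=
  (R * (Xᵀ * X)⁻¹ * Xᵀ * Matrix.diagonal (fun i => d i * (uHat X y i) ^ 2) *
    X * (Xᵀ * X)⁻¹ * Rᵀ) 0 0

/-- Heteroskedasticity robust test statistic `T_Het`. -/
noncomputable def THet {n k : ℕ} (X : Matrix (Fin n) (Fin k) ℝ)
    (R : Matrix (Fin 1) (Fin k) ℝ) (d : Fin n → ℝ) (r : ℝ) (y : Fin n → ℝ) : ℝ :=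
  if OmegaHat X R d y ≠ 0 then (R.mulVec (betaHat X y) 0 - r) ^ 2 / OmegaHat X R d y
  else 0

/-- `𝔐₀^lin = {Xβ : Rβ = 0}`. -/
def M0lin {n k : ℕ} (X : Matrix (Fin n) (Fin k) ℝ)
    (R : Matrix (Fin 1) (Fin k) ℝ) : Set (Fin n → ℝ) :=
  {y | ∃ β : Fin k → ℝ, y = X.mulVec β ∧ R.mulVec β 0 = 0}

/-- `𝓥_# = span{eᵢ(n) : i ∈ 𝓘_#, eᵢ(n) ∈ 𝖡}`. -/
noncomputable def Vsharp {n k : ℕ} (X : Matrix (Fin n) (Fin k) ℝ)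
    (R : Matrix (Fin 1) (Fin k) ℝ) : Submodule ℝ (Fin n → ℝ) :=
  Submodule.span ℝ ((fun i => (Pi.single i 1 : Fin n → ℝ)) ''
    {i | cRow X R 0 i = 0 ∧ (Pi.single i 1 : Fin n → ℝ) ∈ Bset X R})

/-- `𝓛_# = span(𝔐₀^lin ∪ 𝓥_#)`. -/
noncomputable def Lsharp {n k : ℕ} (X : Matrix (Fin n) (Fin k) ℝ)
    (R : Matrix (Fin 1) (Fin k) ℝ) : Submodule ℝ (Fin n → ℝ) :=
  Submodule.span ℝ (M0lin X R ∪ (Vsharp X R : Set (Fin n → ℝ)))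


lemma isUnit_XtX {n k : ℕ} (X : Matrix (Fin n) (Fin k) ℝ) (hX : X.rank = k) :
    IsUnit (Xᵀ * X) := by
  rw [Matrix.isUnit_iff_isUnit_det, ← Matrix.isUnit_iff_isUnit_det,
    ← Matrix.mulVec_injective_iff_isUnit]
  have hrank : (Xᵀ * X).rank = Fintype.card (Fin k) := by
    rw [Matrix.rank_transpose_mul_self, hX, Fintype.card_fin]
  have hsurj : Function.Surjective (Xᵀ * X).mulVecLin := by
    rw [← LinearMap.range_eq_top]
    apply Submodule.eq_top_of_finrank_eq
    rw [← Matrix.rank, hrank, Module.finrank_pi, Fintype.card_fin]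
  exact (LinearMap.injective_iff_surjective).mpr hsurj

theorem stmt15    {n k : ℕ} (hk : 1 ≤ k) (hkn : k < n)
    (X : Matrix (Fin n) (Fin k) ℝ) (hX : X.rank = k)
    (R : Matrix (Fin 1) (Fin k) ℝ) (hR : R ≠ 0) :
    {i : Fin n | (Pi.single i 1 : Fin n → ℝ) ∈ M0lin X R} ⊆
      {i : Fin n | (Pi.single i 1 : Fin n → ℝ) ∈ Lsharp X R} ∧
    {i : Fin n | (Pi.single i 1 : Fin n → ℝ) ∈ Lsharp X R} ⊆
      {i : Fin n | cRow X R 0 i = 0} ∧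
    {i : Fin n | cRow X R 0 i = 0} ≠ Set.univ := by
  have hU := isUnit_XtX X hX
  have hdet : IsUnit (Xᵀ * X).det := (Matrix.isUnit_iff_isUnit_det _).mp hU
  have hinv : (Xᵀ * X)⁻¹ * (Xᵀ * X) = 1 := Matrix.nonsing_inv_mul _ hdet
  -- the linear functional y ↦ (cRow X R *ᵥ y) 0
  set f : (Fin n → ℝ) →ₗ[ℝ] ℝ :=
    (LinearMap.proj 0).comp (cRow X R).mulVecLin with hf
  have hfapp : ∀ y, f y = ((cRow X R).mulVec y) 0 := fun y => rfl
  have hker : Lsharp X R ≤ LinearMap.ker f := by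
    rw [Lsharp, Submodule.span_le]
    rintro y (⟨β, rfl, hβ⟩ | hy)
    · simp only [SetLike.mem_coe, LinearMap.mem_ker, hfapp]
      rw [cRow, Matrix.mulVec_mulVec, Matrix.mul_assoc (R * (Xᵀ * X)⁻¹),
        Matrix.mul_assoc, hinv, Matrix.mul_one]
      simpa using hβ
    · -- y ∈ Vsharp
      have : (Vsharp X R : Set (Fin n → ℝ)) ⊆ LinearMap.ker f := by
        intro z hz
        refine Submodule.span_le.mpr ?_ hz
        rintro z ⟨i, ⟨hci, -⟩, rfl⟩
        simp only [SetLike.mem_coe, LinearMap.mem_ker, hfapp]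
        rw [Matrix.mulVec_single_one]
        simpa using hci
      exact this hy
  refine ⟨?_, ?_, ?_⟩
  · intro i hi
    exact Submodule.subset_span (Or.inl hi)
  · intro i hi
    have := hker hi
    rw [LinearMap.mem_ker, hfapp, Matrix.mulVec_single_one] at this
    simpa using this
  · intro h
    apply hR
    have hc : cRow X R = 0 := by
      ext a j
      have : j ∈ ({i : Fin n | cRow X R 0 i = 0}) := h ▸ Set.mem_univ j
      have ha : a = 0 := Subsingleton.elim a 0
      simpa [ha] using this
    have : cRow X R * X = R := by
      rw [cRow, Matrix.mul_assoc (R * (Xᵀ * X)⁻¹), Matrix.mul_assoc, hinv, Matrix.mul_one]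
    rw [hc, Matrix.zero_mul] at this
    exact this.symm
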